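/- Let n be a positive integer not divisible by 3. For every (3,n)-Dyck path Π, area(Π) + skips(Π) + dinv(Π) = n − 1. -/

import Mathlib

open MvPolynomial

/-- An `(m,n)`-Dyck path: a north/east lattice path from `(0,0)` to `(m,n)` staying
weakly above the diagonal `y = (n/m)x`.  Such a path is encoded by recording, for each
of the `m` columns (indexed `0,…,m-1` from left to right), the number of cells of that
column lying above the path; this gives an antitone sequence, and the diagonal
condition for the east step in column `i` reads `m * c i ≤ n * (m - 1 - i)`. -/
def DyckPath (m n : ℕ) : Type :=
  {c : Fin m → Fin (n + 1) //
    (∀ i j : Fin m, i ≤ j → (c j : ℕ) ≤ (c i : ℕ)) ∧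
      ∀ i : Fin m, m * (c i : ℕ) ≤ n * (m - 1 - (i : ℕ))}

noncomputable instance instFintypeDyckPath (m n : ℕ) : Fintype (DyckPath m n) := by
  classical
  unfold DyckPath
  infer_instance

namespace DyckPath

variable {m n : ℕ}

/-- `λ(Π)`, the set of cells of the `m × n` lattice lying above the path `Π`.
The cell `(i, j)` (with `i : Fin m`, `j : Fin n`) is the cell in column `i + 1`
(from the left) and row `j + 1` (from the bottom) in the paper's 1-based indexing. -/
def cellsAbove (P : DyckPath m n) : Set (Fin m × Fin n) :=
  {x | n - (P.1 x.1 : ℕ) ≤ (x.2 : ℕ)}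

/-- `arm(x)`: the number of cells of `λ(Π)` strictly east of `x` (in the row of `x`). -/
noncomputable def arm (P : DyckPath m n) (x : Fin m × Fin n) : ℕ :=
  {y ∈ P.cellsAbove | x.1 < y.1 ∧ y.2 = x.2}.ncard

/-- `leg(x)`: the number of cells of `λ(Π)` strictly south of `x` (in the column of `x`). -/
noncomputable def leg (P : DyckPath m n) (x : Fin m × Fin n) : ℕ :=
  {y ∈ P.cellsAbove | y.1 = x.1 ∧ y.2 < x.2}.ncard

end DyckPath

/-- The dinv condition `arm/(leg+1) < m/n < (arm+1)/leg` for a cell with given arm `a`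
and leg `l`, the right inequality being interpreted as true when `l = 0`. -/
def dinvCond (m n a l : ℕ) : Prop :=
  (a : ℚ) / ((l : ℚ) + 1) < (m : ℚ) / (n : ℚ) ∧
    (l = 0 ∨ (m : ℚ) / (n : ℚ) < ((a : ℚ) + 1) / (l : ℚ))

namespace DyckPath

variable {m n : ℕ}

/-- `dinv(Π)`: the number of cells `x ∈ λ(Π)` with
`arm(x)/(leg(x)+1) < m/n < (arm(x)+1)/leg(x)`. -/
noncomputable def dinv (P : DyckPath m n) : ℕ :=
  {x ∈ P.cellsAbove | dinvCond m n (P.arm x) (P.leg x)}.ncard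

/-- `area(Π)`: the number of cells of the lattice lying entirely between the path and
the diagonal, i.e. cells lying entirely weakly above the diagonal `y = (n/m)x` and
below the path. -/
noncomputable def area (P : DyckPath m n) : ℕ :=
  {x : Fin m × Fin n | n * ((x.1 : ℕ) + 1) ≤ m * (x.2 : ℕ) ∧ x ∉ P.cellsAbove}.ncard

end DyckPath

/-- The `(m,n)`-rational `q,t`-Catalan polynomial `C_{m,n}(q,t)`, with `q = X 0` and
`t = X 1`:  `C_{m,n}(q,t) = Σ_Π q^{dinv(Π)} t^{area(Π)}` over all `(m,n)`-Dyck paths. -/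
noncomputable def ratCatalan (m n : ℕ) : MvPolynomial (Fin 2) ℤ :=
  ∑ P : DyckPath m n, X 0 ^ P.dinv * X 1 ^ P.area

/-- The rank of the cell `(i, j)` of the `3 × n` lattice: in the paper's 1-based
coordinates `(a, b) = (i+1, j+1)`, this is `R(a,b) = -a·n + 3(b-1)`. -/
def cellRank (n : ℕ) (x : Fin 3 × Fin n) : ℤ :=
  3 * (x.2 : ℤ) - ((x.1 : ℤ) + 1) * (n : ℤ)

/-- The set of positive ranks of the `3 × n` lattice: these, in increasing order, are
the entries of the rank word. -/
def posRank (n : ℕ) : Set ℤ :=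
  {r | 0 < r ∧ ∃ x : Fin 3 × Fin n, cellRank n x = r}

/-- The set of marked ranks of a `(3,n)`-Dyck path: the ranks of the cells above
the path. -/
def markedRank {n : ℕ} (P : DyckPath 3 n) : Set ℤ :=
  cellRank n '' P.cellsAbove

/-- `skips(Π)`: the number of skips of `Π`, i.e. of maximal blocks of consecutive
unmarked entries of the rank word of `Π` having at least one marked entry to the left
and at least one marked entry to the right.  Each such block is counted through its
rightmost entry `r`: `r` is an unmarked entry, some marked entry lies to its left, and
the next entry of the rank word after `r` is marked. -/
noncomputable def DyckPath.skips {n : ℕ} (P : DyckPath 3 n) : ℕ :=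
  {r : ℤ | r ∈ posRank n ∧ r ∉ markedRank P ∧
    (∃ l ∈ markedRank P, l < r) ∧
    ∃ s ∈ markedRank P, r < s ∧ ∀ t ∈ posRank n, r < t → s ≤ t}.ncard

/-!
A `(3,n)`-Dyck path is determined by the numbers `a ≥ b` of cells above it in the first two
columns (the last column is empty), subject to `3a < 2n` and `3b < n`; write `q = ⌊n/3⌋`.
Counting column by column gives `area = n - 1 - a - b` and
`dinv = b + min (a - b) (q + 1) + min b (a - q)`: every cell above the path in the middle column
counts, while in the first column the arm is `0` or `1` and the dinv condition becomes a
bound on the leg.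

The positive ranks are the positive integers `≤ 2n - 3` congruent to `-n` modulo `3` (first
column) and those `≤ n - 3` congruent to `n` (middle column); the marked ranks form a final
segment of each class. Below `n` the
two classes alternate, above `n` only the first one remains, so the successor of a rank is
explicit. A skip therefore ends either at an unmarked middle-column rank exceeding some marked
first-column rank, or at an unmarked first-column rank exceeding some marked middle-column rank
and followed by a marked rank. Distinct cells have distinct ranks, so skip ends can be counted
over cells, column by column: `skips = (b - (a - q)) + (a - b - (q + 1))` in truncated
subtraction, and the three counts add up to `n - 1`.
-/

-- `omega` fails on several goals below unless the residue of `n` modulo `3` is made explicit.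
theorem Nat.exists_eq_three_mul_add_one_or_two {n : ℕ} (h3 : ¬ 3 ∣ n) :
    ∃ k, n = 3 * k + 1 ∨ n = 3 * k + 2 :=
  ⟨n / 3, by omega⟩

theorem Set.ncard_eq_sum_ncard_fiber {α β : Type*} [Fintype α] [Finite β] (S : Set (α × β)) :
    S.ncard = ∑ a, {b | (a, b) ∈ S}.ncard := by
  classical
  have := Fintype.ofFinite β
  simp only [Set.ncard_eq_toFinset_card', Set.toFinset_card]
  rw [← Fintype.card_sigma]
  exact Fintype.card_congr
    ⟨fun x => ⟨x.1.1, x.1.2, x.2⟩, fun x => ⟨(x.1, x.2.1), x.2.2⟩, fun _ => rfl, fun _ => rfl⟩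

theorem Fin.ncard_setOf_eq_of_iff_Ico {n lo hi : ℕ} {p : Fin n → Prop}
    (h : ∀ j : Fin n, p j ↔ lo ≤ j ∧ j < hi) : {j | p j}.ncard = min hi n - lo := by
  rw [← Set.ncard_image_of_injective _ Fin.val_injective, ← Set.ncard_Ico_nat]
  congr 1
  ext k
  simp only [Set.mem_image, Set.mem_ofPred_eq, h, Set.mem_Ico]
  constructor
  · rintro ⟨j, hj, rfl⟩
    omega
  · intro hk
    exact ⟨⟨k, by omega⟩, by simp only; omega, rfl⟩

theorem Fin.ncard_setOf_eq_of_iff_Ico_or_Ico {n lo₁ hi₁ lo₂ hi₂ : ℕ} {p : Fin n → Prop}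
    (h : ∀ j : Fin n, p j ↔ (lo₁ ≤ j ∧ j < hi₁) ∨ (lo₂ ≤ j ∧ j < hi₂)) (h₁₂ : hi₁ ≤ lo₂) :
    {j | p j}.ncard = (min hi₁ n - lo₁) + (min hi₂ n - lo₂) := by
  have hdisj : Disjoint {j : Fin n | lo₁ ≤ j ∧ j < hi₁} {j : Fin n | lo₂ ≤ j ∧ j < hi₂} :=
    Set.disjoint_left.2 fun j h₁ h₂ => by
      simp only [Set.mem_ofPred_eq] at h₁ h₂
      omega
  rw [show {j | p j} = {j : Fin n | lo₁ ≤ j ∧ j < hi₁} ∪ {j : Fin n | lo₂ ≤ j ∧ j < hi₂} by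
      ext j; exact h j,
    Set.ncard_union_eq hdisj, Fin.ncard_setOf_eq_of_iff_Ico fun _ => Iff.rfl,
    Fin.ncard_setOf_eq_of_iff_Ico fun _ => Iff.rfl]

theorem dinvCond_iff {m n a l : ℕ} (hn : 0 < n) :
    dinvCond m n a l ↔ a * n < m * (l + 1) ∧ (l = 0 ∨ m * l < (a + 1) * n) := by
  have hn' : (0 : ℚ) < n := by exact_mod_cast hn
  have right_iff (hl : 0 < l) : (m : ℚ) / n < (a + 1) / l ↔ m * l < (a + 1) * n := by
    rw [div_lt_div_iff₀ hn' (by exact_mod_cast hl)]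
    norm_cast
  unfold dinvCond
  rw [div_lt_div_iff₀ (by positivity) hn']
  refine and_congr (by norm_cast) ?_
  rcases Nat.eq_zero_or_pos l with hl | hl
  · simp [hl]
  · simp [hl.ne', right_iff hl]

namespace DyckPath

variable {m n : ℕ}

theorem val_le_of_le (P : DyckPath m n) {i j : Fin m} (h : i ≤ j) : (P.1 j : ℕ) ≤ P.1 i :=
  P.2.1 i j h

theorem mul_val_le (P : DyckPath m n) (i : Fin m) : m * (P.1 i : ℕ) ≤ n * (m - 1 - i) :=
  P.2.2 i

theorem val_last (P : DyckPath (m + 1) n) : (P.1 (Fin.last m) : ℕ) = 0 := by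
  simpa using P.mul_val_le (Fin.last m)

theorem leg_eq (P : DyckPath m n) (x : Fin m × Fin n) :
    P.leg x = x.2 - (n - P.1 x.1) := by
  have hinj : Function.Injective fun j : Fin n => (x.1, j) := fun _ _ h => (Prod.ext_iff.1 h).2
  rw [leg, show {y ∈ P.cellsAbove | y.1 = x.1 ∧ y.2 < x.2}
      = (fun j => (x.1, j)) '' {j : Fin n | n - (P.1 x.1 : ℕ) ≤ j ∧ (j : ℕ) < x.2} by
    ext ⟨i, j⟩
    simp only [cellsAbove, Set.mem_ofPred_eq, Set.mem_image, Prod.mk.injEq, Fin.lt_def]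
    constructor
    · rintro ⟨hj, rfl, hlt⟩
      exact ⟨j, ⟨hj, hlt⟩, rfl, rfl⟩
    · rintro ⟨j, ⟨hj, hlt⟩, rfl, rfl⟩
      exact ⟨hj, rfl, hlt⟩,
    Set.ncard_image_of_injective _ hinj, Fin.ncard_setOf_eq_of_iff_Ico fun _ => Iff.rfl]
  omega

end DyckPath

theorem cellRank_injective {n : ℕ} (h3 : ¬ 3 ∣ n) : Function.Injective (cellRank n) := by
  rintro ⟨i, j⟩ ⟨i', j'⟩ h
  fin_cases i <;> fin_cases i' <;> simp [cellRank, Fin.ext_iff] at h ⊢ <;> omega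

theorem mem_posRank_iff {n : ℕ} (r : ℤ) :
    r ∈ posRank n ↔ 0 < r ∧ ((3 ∣ r + n ∧ r ≤ 2 * n - 3) ∨ (3 ∣ r + 2 * n ∧ r ≤ n - 3)) := by
  refine ⟨?_, ?_⟩
  · rintro ⟨hr, ⟨i, j⟩, rfl⟩
    have := j.isLt
    fin_cases i <;> simp [cellRank] at hr ⊢ <;> omega
  · rintro ⟨hr, ⟨⟨k, hk⟩, hle⟩ | ⟨⟨k, hk⟩, hle⟩⟩
    · exact ⟨hr, (0, ⟨k.toNat, by omega⟩), by simp only [cellRank, Fin.val_zero]; omega⟩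
    · exact ⟨hr, (1, ⟨k.toNat, by omega⟩), by simp only [cellRank, Fin.val_one]; omega⟩

/-- The entry following `r` in the rank word: below `n` every positive integer prime to `3`
is a rank, above `n` only every third one. -/
def nextRank (n : ℕ) (r : ℤ) : ℤ :=
  if r + 2 < n then (if 3 ∣ r + 1 then r + 2 else r + 1) else r + 3

theorem lt_nextRank (n : ℕ) (r : ℤ) : r < nextRank n r := by
  unfold nextRank
  split_ifs <;> omega

theorem isLeast_nextRank {n : ℕ} {r : ℤ} (h3 : ¬ 3 ∣ n) (hr : r ∈ posRank n)
    (h : ∃ t ∈ posRank n, r < t) : IsLeast {t ∈ posRank n | r < t} (nextRank n r) := by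
  obtain ⟨t, ht, hrt⟩ := h
  obtain ⟨k, hk⟩ := Nat.exists_eq_three_mul_add_one_or_two h3
  rw [mem_posRank_iff] at hr ht
  refine ⟨⟨?_, lt_nextRank n r⟩, fun s ⟨hs, hrs⟩ => ?_⟩
  · rw [mem_posRank_iff]
    unfold nextRank
    split_ifs <;> omega
  · rw [mem_posRank_iff] at hs
    unfold nextRank
    split_ifs <;> omega

namespace DyckPath

variable {n : ℕ} (P : DyckPath 3 n)

theorem val_one_le_val_zero : (P.1 1 : ℕ) ≤ P.1 0 := P.val_le_of_le (by decide)

theorem three_mul_val_zero_le : 3 * (P.1 0 : ℕ) ≤ 2 * n := by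
  simpa [mul_comm] using P.mul_val_le 0

theorem three_mul_val_one_le : 3 * (P.1 1 : ℕ) ≤ n := by simpa using P.mul_val_le 1

theorem val_two : (P.1 2 : ℕ) = 0 := P.val_last (m := 2)

theorem area_eq (h3 : ¬ 3 ∣ n) : P.area = n - 1 - P.1 0 - P.1 1 := by
  have := P.three_mul_val_zero_le
  have := P.three_mul_val_one_le
  have := P.val_two
  obtain ⟨k, hk⟩ := Nat.exists_eq_three_mul_add_one_or_two h3
  rw [area, Set.ncard_eq_sum_ncard_fiber, Fin.sum_univ_three]
  simp only [Set.mem_ofPred_eq, cellsAbove]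
  rw [Fin.ncard_setOf_eq_of_iff_Ico (lo := (n + 2) / 3) (hi := n - (P.1 0 : ℕ)) ?col0,
    Fin.ncard_setOf_eq_of_iff_Ico (lo := (2 * n + 2) / 3) (hi := n - (P.1 1 : ℕ)) ?col1,
    Fin.ncard_setOf_eq_of_iff_Ico (lo := 0) (hi := 0) ?col2]
  case col0 | col1 | col2 =>
    intro j
    simp only [Fin.val_zero, Fin.val_one, Fin.val_two]
    omega
  omega

theorem arm_zero (j : Fin n) : P.arm (0, j) = if n - P.1 1 ≤ (j : ℕ) then 1 else 0 := by
  have := P.val_two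
  split_ifs with h
  · rw [arm, Set.ncard_eq_one]
    refine ⟨(1, j), ?_⟩
    ext ⟨i, j'⟩
    fin_cases i <;> simp [cellsAbove, Prod.ext_iff] <;> omega
  · rw [arm, Set.ncard_eq_zero]
    ext ⟨i, j'⟩
    fin_cases i <;> simp [cellsAbove] <;> omega

theorem arm_one (j : Fin n) : P.arm (1, j) = 0 := by
  have := P.val_two
  rw [arm, Set.ncard_eq_zero]
  ext ⟨i, j'⟩
  fin_cases i <;> simp [cellsAbove]; omega

theorem dinv_eq (h3 : ¬ 3 ∣ n) :
    P.dinv = (P.1 1 : ℕ) + min ((P.1 0 : ℕ) - P.1 1) (n / 3 + 1) +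
      min (P.1 1 : ℕ) (P.1 0 - n / 3) := by
  have := P.three_mul_val_zero_le
  have := P.three_mul_val_one_le
  have := P.val_one_le_val_zero
  have := P.val_two
  have hn : 0 < n := Nat.pos_of_ne_zero (by rintro rfl; exact h3 (dvd_zero 3))
  rw [dinv, Set.ncard_eq_sum_ncard_fiber, Fin.sum_univ_three]
  simp only [Set.mem_ofPred_eq, cellsAbove, arm_zero, arm_one, leg_eq, dinvCond_iff hn]
  rw [Fin.ncard_setOf_eq_of_iff_Ico_or_Ico (lo₁ := n - (P.1 0 : ℕ))
      (hi₁ := min (n - (P.1 1 : ℕ)) (n - (P.1 0 : ℕ) + n / 3 + 1))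
      (lo₂ := max (n - (P.1 1 : ℕ)) (n - (P.1 0 : ℕ) + n / 3)) (hi₂ := n) ?col0 (by omega),
    Fin.ncard_setOf_eq_of_iff_Ico (lo := n - (P.1 1 : ℕ)) (hi := n) ?col1,
    Fin.ncard_setOf_eq_of_iff_Ico (lo := 0) (hi := 0) ?col2]
  case col0 | col1 | col2 =>
    intro j
    have := j.isLt
    (try split_ifs) <;> omega
  omega

theorem mem_markedRank_iff (r : ℤ) :
    r ∈ markedRank P ↔ (3 ∣ r + n ∧ 2 * n - 3 * (P.1 0 : ℕ) ≤ r ∧ r ≤ 2 * n - 3) ∨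
      (3 ∣ r + 2 * n ∧ n - 3 * (P.1 1 : ℕ) ≤ r ∧ r ≤ n - 3) := by
  have := P.val_two
  refine ⟨?_, ?_⟩
  · rintro ⟨⟨i, j⟩, hx, rfl⟩
    have := j.isLt
    fin_cases i <;> simp [cellsAbove, cellRank] at hx ⊢ <;> omega
  · rintro (⟨⟨k, hk⟩, hlo, hhi⟩ | ⟨⟨k, hk⟩, hlo, hhi⟩)
    · refine ⟨(0, ⟨k.toNat, by omega⟩), ?_, by simp only [cellRank, Fin.val_zero]; omega⟩
      simp only [cellsAbove, Set.mem_ofPred_eq]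
      omega
    · refine ⟨(1, ⟨k.toNat, by omega⟩), ?_, by simp only [cellRank, Fin.val_one]; omega⟩
      simp only [cellsAbove, Set.mem_ofPred_eq]
      omega

theorem markedRank_subset_posRank (h3 : ¬ 3 ∣ n) : markedRank P ⊆ posRank n := by
  have := P.three_mul_val_zero_le
  have := P.three_mul_val_one_le
  intro r hr
  rw [mem_markedRank_iff] at hr
  rw [mem_posRank_iff]
  omega

theorem exists_markedRank_lt_iff (r : ℤ) :
    (∃ l ∈ markedRank P, l < r) ↔ (0 < (P.1 1 : ℕ) ∧ n - 3 * (P.1 1 : ℕ) < r) ∨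
      (0 < (P.1 0 : ℕ) ∧ 2 * n - 3 * (P.1 0 : ℕ) < r) := by
  simp only [mem_markedRank_iff]
  refine ⟨?_, ?_⟩
  · rintro ⟨l, hl, hlr⟩
    omega
  · rintro (⟨hb, hr⟩ | ⟨ha, hr⟩)
    · exact ⟨n - 3 * (P.1 1 : ℕ), by omega, hr⟩
    · exact ⟨2 * n - 3 * (P.1 0 : ℕ), by omega, hr⟩

def IsSkipEnd (r : ℤ) : Prop :=
  r ∈ posRank n ∧ r ∉ markedRank P ∧ (∃ l ∈ markedRank P, l < r) ∧
    ∃ s ∈ markedRank P, r < s ∧ ∀ t ∈ posRank n, r < t → s ≤ t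

theorem skips_eq_ncard_isSkipEnd : P.skips = {r | P.IsSkipEnd r}.ncard := rfl

theorem isSkipEnd_iff (h3 : ¬ 3 ∣ n) (r : ℤ) :
    P.IsSkipEnd r ↔ r ∈ posRank n ∧ r ∉ markedRank P ∧ (∃ l ∈ markedRank P, l < r) ∧
      nextRank n r ∈ markedRank P := by
  refine and_congr_right fun hr => and_congr_right' <| and_congr_right' ⟨?_, fun hs => ?_⟩
  · rintro ⟨s, hs, hrs, hmin⟩
    have hleast : IsLeast {t ∈ posRank n | r < t} s :=
      ⟨⟨P.markedRank_subset_posRank h3 hs, hrs⟩, fun t ht => hmin t ht.1 ht.2⟩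
    rwa [hleast.unique (isLeast_nextRank h3 hr ⟨s, hleast.1⟩)] at hs
  · have hleast := isLeast_nextRank h3 hr
      ⟨_, P.markedRank_subset_posRank h3 hs, lt_nextRank n r⟩
    exact ⟨_, hs, hleast.1.2, fun t ht hrt => hleast.2 ⟨ht, hrt⟩⟩

theorem isSkipEnd_cellRank_zero_iff (h3 : ¬ 3 ∣ n) (j : Fin n) :
    P.IsSkipEnd (cellRank n (0, j)) ↔ 0 < (P.1 1 : ℕ) ∧ 2 * n < 3 * ((j : ℕ) + P.1 1) ∧
      (j : ℕ) < n - P.1 0 ∧ (3 * (j : ℕ) + 2 < 2 * n ∨ (j : ℕ) + 1 = n - P.1 0) := by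
  have := P.three_mul_val_zero_le
  have := P.three_mul_val_one_le
  have := P.val_one_le_val_zero
  obtain ⟨k, hk⟩ := Nat.exists_eq_three_mul_add_one_or_two h3
  rw [isSkipEnd_iff P h3, mem_posRank_iff, mem_markedRank_iff, mem_markedRank_iff,
    exists_markedRank_lt_iff]
  simp only [cellRank, nextRank, Fin.val_zero, Nat.cast_zero]
  split_ifs <;> omega

theorem isSkipEnd_cellRank_one_iff (h3 : ¬ 3 ∣ n) (j : Fin n) :
    P.IsSkipEnd (cellRank n (1, j)) ↔ 4 * n < 3 * ((j : ℕ) + P.1 0) ∧ (j : ℕ) < n - P.1 1 := by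
  have := P.three_mul_val_zero_le
  have := P.three_mul_val_one_le
  have := P.val_one_le_val_zero
  obtain ⟨k, hk⟩ := Nat.exists_eq_three_mul_add_one_or_two h3
  rw [isSkipEnd_iff P h3, mem_posRank_iff, mem_markedRank_iff, mem_markedRank_iff,
    exists_markedRank_lt_iff]
  simp only [cellRank, nextRank, Fin.val_one, Nat.cast_one]
  split_ifs <;> omega

theorem not_isSkipEnd_cellRank_two (j : Fin n) : ¬ P.IsSkipEnd (cellRank n (2, j)) := by
  rintro ⟨⟨hr, -⟩, -⟩
  simp only [cellRank, Fin.val_two] at hr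
  omega

theorem ncard_isSkipEnd_cellRank_zero (h3 : ¬ 3 ∣ n) :
    {j : Fin n | P.IsSkipEnd (cellRank n (0, j))}.ncard = (P.1 1 : ℕ) - (P.1 0 - n / 3) := by
  have := P.three_mul_val_zero_le
  have := P.three_mul_val_one_le
  simp only [P.isSkipEnd_cellRank_zero_iff h3]
  rcases Nat.eq_zero_or_pos (P.1 1 : ℕ) with hb | hb
  · rw [Fin.ncard_setOf_eq_of_iff_Ico (lo := 0) (hi := 0) (by omega)]
    omega
  · rw [Fin.ncard_setOf_eq_of_iff_Ico_or_Ico (lo₁ := 2 * n / 3 + 1 - (P.1 1 : ℕ))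
      (hi₁ := min (2 * n / 3) (n - (P.1 0 : ℕ))) (lo₂ := max (2 * n / 3) (n - (P.1 0 : ℕ) - 1))
      (hi₂ := n - (P.1 0 : ℕ)) (by omega) (by omega)]
    omega

theorem ncard_isSkipEnd_cellRank_one (h3 : ¬ 3 ∣ n) :
    {j : Fin n | P.IsSkipEnd (cellRank n (1, j))}.ncard =
      ((P.1 0 : ℕ) - P.1 1) - (n / 3 + 1) := by
  have := P.three_mul_val_zero_le
  have := P.three_mul_val_one_le
  simp only [P.isSkipEnd_cellRank_one_iff h3]
  rw [Fin.ncard_setOf_eq_of_iff_Ico (lo := 4 * n / 3 + 1 - (P.1 0 : ℕ)) (hi := n - (P.1 1 : ℕ))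
    (by omega)]
  omega

theorem skips_eq (h3 : ¬ 3 ∣ n) :
    P.skips = ((P.1 1 : ℕ) - (P.1 0 - n / 3)) + (((P.1 0 : ℕ) - P.1 1) - (n / 3 + 1)) := by
  rw [skips_eq_ncard_isSkipEnd, ← Set.ncard_preimage_of_injective_subset_range
      (cellRank_injective h3) fun r hr => hr.1.2, Set.ncard_eq_sum_ncard_fiber, Fin.sum_univ_three]
  simp only [Set.mem_preimage, Set.mem_ofPred_eq, P.not_isSkipEnd_cellRank_two, Set.ofPred_false,
    Set.ncard_empty, add_zero]
  rw [P.ncard_isSkipEnd_cellRank_zero h3, P.ncard_isSkipEnd_cellRank_one h3]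

end DyckPath

theorem area_add_skips_add_dinv_general (n : ℕ) (h3 : ¬ (3 ∣ n))
    (P : DyckPath 3 n) :
    P.area + P.skips + P.dinv = n - 1 := by
  have := P.three_mul_val_zero_le
  have := P.three_mul_val_one_le
  have := P.val_one_le_val_zero
  rw [P.area_eq h3, P.skips_eq h3, P.dinv_eq h3]
  omega

/-- For every `(3,n)`-Dyck path `Π` (with `3 ∤ n`),
`area(Π) + skips(Π) + dinv(Π) = n − 1`. -/
theorem area_add_skips_add_dinv (n : ℕ) (hn : 0 < n) (h3 : ¬ (3 ∣ n))
    (P : DyckPath 3 n) :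
    P.area + P.skips + P.dinv = n - 1 :=
  area_add_skips_add_dinv_general n h3 P
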